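/- The quadratic form f₀(x) = −(3 + 2√5) x₀² + x₁² + x₂² + x₃² + x₄² + x₅² is anisotropic over ℚ(√5): if x₀, …, x₅ ∈ ℚ(√5) satisfy −(3+2√5) x₀² + x₁² + ⋯ + x₅² = 0, then x₀ = x₁ = ⋯ = x₅ = 0. -/

import Mathlib

/-!
Apply the nontrivial embedding `σ : ℚ(√5) → ℝ`, `√5 ↦ -√5`. It turns `f₀(x) = 0` into
`(2√5 - 3) σ(x₀)² + σ(x₁)² + ⋯ + σ(x₅)² = 0`, a positive definite form since `2√5 > 3`, so every
`σ(xᵢ)` vanishes, and hence every `xᵢ` because `σ` is injective.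
-/

/-- The real quadratic field `K = ℚ(√5)`, as a subfield of `ℝ`. -/
noncomputable def K : IntermediateField ℚ ℝ := IntermediateField.adjoin ℚ {Real.sqrt 5}

open Polynomial IntermediateField

lemma rat_sq_ne_five (q : ℚ) : q ^ 2 ≠ 5 := by
  intro hq
  refine Nat.prime_five.irrational_sqrt ⟨|q|, ?_⟩
  rw [Rat.cast_abs, ← Real.sqrt_sq_eq_abs, ← Rat.cast_pow, hq]
  norm_num

lemma minpoly_sqrt_five : minpoly ℚ √5 = X ^ 2 - C 5 :=
  (minpoly.eq_of_irreducible_of_monic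
    (X_pow_sub_C_irreducible_of_prime Nat.prime_two rat_sq_ne_five) (by simp)
    (monic_X_pow_sub_C _ two_ne_zero)).symm

lemma isIntegral_sqrt_five : IsIntegral ℚ √5 :=
  ⟨X ^ 2 - C 5, monic_X_pow_sub_C _ two_ne_zero, by simp⟩

noncomputable def conjSqrtFive : ℚ⟮√5⟯ →ₐ[ℚ] ℝ :=
  (algHomAdjoinIntegralEquiv ℚ isIntegral_sqrt_five).symm
    ⟨-√5, by simp [minpoly_sqrt_five, X_pow_sub_C_ne_zero two_pos]⟩

lemma conjSqrtFive_gen : conjSqrtFive (AdjoinSimple.gen ℚ √5) = -√5 :=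
  algHomAdjoinIntegralEquiv_symm_apply_gen ℚ _ _

lemma eq_zero_of_sum_mul_sq_eq_zero {R ι : Type*} [Ring R] [LinearOrder R]
    [IsStrictOrderedRing R] [Fintype ι] {w y : ι → R} (hw : ∀ i, 0 < w i)
    (h : ∑ i, w i * y i ^ 2 = 0) (i : ι) : y i = 0 := by
  have hnonneg : ∀ j ∈ Finset.univ, 0 ≤ w j * y j ^ 2 :=
    fun j _ => mul_nonneg (hw j).le (sq_nonneg _)
  have hi := (Finset.sum_eq_zero_iff_of_nonneg hnonneg).1 h i (Finset.mem_univ i)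
  simpa [(hw i).ne'] using hi

/-- The quadratic form `f₀(x) = -(3 + 2√5) x₀² + x₁² + ⋯ + x₅²` is anisotropic over
`ℚ(√5)`: any solution of `f₀(x) = 0` with all coordinates in `ℚ(√5)` is trivial. -/
theorem stmt_11 :
    ∀ x : Fin 6 → ℝ, (∀ i, x i ∈ K) →
      -(3 + 2 * Real.sqrt 5) * x 0 ^ 2 + x 1 ^ 2 + x 2 ^ 2 + x 3 ^ 2 + x 4 ^ 2 + x 5 ^ 2 = 0 →
      ∀ i, x i = 0 := by
  intro x hx h i
  let y : Fin 6 → ℚ⟮√5⟯ := fun j => ⟨x j, hx j⟩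
  have hy : -(3 + 2 * AdjoinSimple.gen ℚ √5) * y 0 ^ 2 + y 1 ^ 2 + y 2 ^ 2 + y 3 ^ 2 + y 4 ^ 2
      + y 5 ^ 2 = 0 := Subtype.ext h
  have hσ := congrArg conjSqrtFive hy
  simp only [map_add, map_mul, map_neg, map_pow, map_ofNat, conjSqrtFive_gen, map_zero] at hσ
  have hpos : 0 < 2 * √5 - 3 := by
    nlinarith [Real.sq_sqrt (show (0 : ℝ) ≤ 5 by norm_num), Real.sqrt_nonneg 5]
  have hσy : conjSqrtFive (y i) = 0 :=
    eq_zero_of_sum_mul_sq_eq_zero (w := ![2 * √5 - 3, 1, 1, 1, 1, 1])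
      (y := fun j => conjSqrtFive (y j)) (fun j => by fin_cases j <;> simp [hpos])
      (by simp [Fin.sum_univ_six]; linarith) i
  exact congrArg Subtype.val (conjSqrtFive.injective (hσy.trans (map_zero _).symm))
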